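/- arXiv:2408.09505 — 5 statements merged into one kernel-verified Lean document; each statement's English description precedes it below -/
import Mathlib

section
/- Let T > 0, φ₀ > 0, a₀ > 0, and define A(t) = 2·√(φ₀·a₀) / tanh(√(φ₀/a₀)·(T − t)) for t ∈ [0, T). Then for all t ∈ [0, T): 2·a₀/(T − t) ≤ A(t) ≤ 2·a₀/(T − t) + (2/3)·φ₀·(T − t). -/
/-!
With `x = √(φ₀/a₀) (T - t)` one has `A t = (2 a₀ / (T - t)) · x coth x`, and
`2 a₀ / (T - t) · x² / 3 = (2/3) φ₀ (T - t)`, so the claim is the elementary estimate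
`1 ≤ x coth x ≤ 1 + x² / 3` for `x > 0`. Both halves follow from monotonicity: the derivative of
`x cosh x - sinh x` is `x sinh x ≥ 0`, and that of `(1 + x²/3) sinh x - x cosh x` is
`(x/3)(x cosh x - sinh x) ≥ 0`.
-/

open Real

lemma monotone_mul_cosh_sub_sinh : Monotone fun x : ℝ => x * cosh x - sinh x := by
  refine monotone_of_hasDerivAt_nonneg (f' := fun x => x * sinh x) (fun x => ?_) fun x => ?_
  · exact (((hasDerivAt_id x).mul (hasDerivAt_cosh x)).sub (hasDerivAt_sinh x)).congr_deriv
      (by simp only [id]; ring)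
  · rcases le_total 0 x with hx | hx
    · exact mul_nonneg hx (sinh_nonneg_iff.mpr hx)
    · exact mul_nonneg_of_nonpos_of_nonpos hx (sinh_nonpos_iff.mpr hx)

lemma sinh_le_mul_cosh {x : ℝ} (hx : 0 ≤ x) : sinh x ≤ x * cosh x := by
  simpa using monotone_mul_cosh_sub_sinh hx

lemma mul_cosh_le_mul_sinh {x : ℝ} (hx : 0 ≤ x) : x * cosh x ≤ (1 + x ^ 2 / 3) * sinh x := by
  have hmono : Monotone fun x : ℝ => (1 + x ^ 2 / 3) * sinh x - x * cosh x := by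
    refine monotone_of_hasDerivAt_nonneg (f' := fun x => x / 3 * (x * cosh x - sinh x))
      (fun x => ?_) fun x => ?_
    · exact ((((hasDerivAt_pow 2 x).div_const 3).const_add 1).mul (hasDerivAt_sinh x)).sub
        ((hasDerivAt_id x).mul (hasDerivAt_cosh x)) |>.congr_deriv
          (by simp only [id, Nat.cast_ofNat]; ring)
    · -- `x * cosh x - sinh x` vanishes at `0` and is monotone, so it has the sign of `x`.
      have h := monotone_mul_cosh_sub_sinh
      rcases le_total 0 x with hx | hx
      · exact mul_nonneg (by positivity) (by simpa using h hx)
      · exact mul_nonneg_of_nonpos_of_nonpos (by linarith) (by simpa using h hx)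
  simpa using hmono hx

lemma div_tanh_eq (x : ℝ) : x / tanh x = x * cosh x / sinh x := by
  rw [tanh_eq_sinh_div_cosh, div_div_eq_mul_div]

lemma one_le_div_tanh {x : ℝ} (hx : 0 < x) : 1 ≤ x / tanh x := by
  rw [div_tanh_eq x, one_le_div₀ (sinh_pos_iff.mpr hx)]
  exact sinh_le_mul_cosh hx.le

lemma div_tanh_le {x : ℝ} (hx : 0 < x) : x / tanh x ≤ 1 + x ^ 2 / 3 := by
  rw [div_tanh_eq x, div_le_iff₀ (sinh_pos_iff.mpr hx)]
  exact mul_cosh_le_mul_sinh hx.le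

theorem linear_ansatz_A_bound_general (T φ₀ a₀ : ℝ) (hφ₀ : 0 < φ₀) (ha₀ : 0 < a₀)
    (A : ℝ → ℝ)
    (hA : ∀ t, A t = 2 * Real.sqrt (φ₀ * a₀) / Real.tanh (Real.sqrt (φ₀ / a₀) * (T - t))) :
    ∀ t, 0 ≤ t → t < T →
      2 * a₀ / (T - t) ≤ A t ∧ A t ≤ 2 * a₀ / (T - t) + (2 / 3) * φ₀ * (T - t) := by
  intro t _ htT
  rw [hA t]
  set τ := T - t
  set s := √(φ₀ / a₀)
  have hτ : 0 < τ := sub_pos.mpr htT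
  have hx : 0 < s * τ := mul_pos (sqrt_pos.mpr (by positivity)) hτ
  have hs_sq : s ^ 2 = φ₀ / a₀ := sq_sqrt (by positivity)
  have hA_eq : 2 * √(φ₀ * a₀) / tanh (s * τ) = 2 * a₀ / τ * (s * τ / tanh (s * τ)) := by
    have hsqrt : √(φ₀ * a₀) = a₀ * s := by
      rw [show φ₀ * a₀ = a₀ ^ 2 * (φ₀ / a₀) by field_simp, sqrt_mul (sq_nonneg a₀),
        sqrt_sq ha₀.le]
    rw [hsqrt]
    field_simp
  have hcorr : 2 * a₀ / τ * ((s * τ) ^ 2 / 3) = 2 / 3 * φ₀ * τ := by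
    rw [mul_pow, hs_sq]
    field_simp
  have hcoef : 0 < 2 * a₀ / τ := by positivity
  rw [hA_eq]
  constructor
  · simpa using mul_le_mul_of_nonneg_left (one_le_div_tanh hx) hcoef.le
  · calc 2 * a₀ / τ * (s * τ / tanh (s * τ))
        ≤ 2 * a₀ / τ * (1 + (s * τ) ^ 2 / 3) :=
          mul_le_mul_of_nonneg_left (div_tanh_le hx) hcoef.le
      _ = 2 * a₀ / τ + 2 / 3 * φ₀ * τ := by rw [mul_add, mul_one, hcorr]

theorem linear_ansatz_A_bound (T φ₀ a₀ : ℝ) (hT : 0 < T) (hφ₀ : 0 < φ₀) (ha₀ : 0 < a₀)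
    (A : ℝ → ℝ)
    (hA : ∀ t, A t = 2 * Real.sqrt (φ₀ * a₀) / Real.tanh (Real.sqrt (φ₀ / a₀) * (T - t))) :
    ∀ t, 0 ≤ t → t < T →
      2 * a₀ / (T - t) ≤ A t ∧ A t ≤ 2 * a₀ / (T - t) + (2 / 3) * φ₀ * (T - t) :=
  linear_ansatz_A_bound_general T φ₀ a₀ hφ₀ ha₀ A hA
end

section
/- Let ω > 0, a₀, a, φ₀, φ, λ₀, λ > 0, b > 0, and set d₀ = a₀·ω² + φ₀, d₁ = a·ω² + φ, e₀ = λ₀·ω/2, e₁ = λ·ω/2, K = d₀²·d₁² + 2·d₀·d₁·e₀·e₁ + d₀²·e₁² + e₀²·e₁². Define Q̃Mj(t) = (b·φ₀/K)·[(d₀·d₁² + d₁·e₀·e₁ + d₀·e₁²)·sin(ω·t) − e₀·e₁²·cos(ω·t)] and QMn(t) = (b·φ₀/K)·[−d₀·e₀·e₁·sin(ω·t) + e₀·(d₀·d₁ + e₀·e₁)·cos(ω·t)]. Then these functions satisfy the coupled second-order ODEs: a₀·Q̃Mj''(t) − φ₀·Q̃Mj(t) = −φ₀·b·sin(ω·t)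 − (λ/2)·QMn'(t) and a·QMn''(t) − φ·QMn(t) = −(λ₀/2)·Q̃Mj'(t) − (λ/2)·QMn'(t) for all t ∈ ℝ. -/
/-!
Both components are combinations of `sin (ω t)` and `cos (ω t)`, so the ODE system reduces to
four linear equations for their coefficients. The determinant of that system is
`K = (d₀ d₁ + e₀ e₁)² + (d₀ e₁)²`, which is positive, and the stated coefficients are its solution
by Cramer's rule.
-/

open Real

noncomputable def sinusoid (ω A B t : ℝ) : ℝ := A * sin (ω * t) + B * cos (ω * t)

theorem hasDerivAt_sinusoid (ω A B t : ℝ) :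
    HasDerivAt (sinusoid ω A B) (sinusoid ω (-(B * ω)) (A * ω) t) t := by
  have hlin : HasDerivAt (fun t : ℝ => ω * t) ω t := by
    simpa using (hasDerivAt_id t).const_mul ω
  have hsin := ((hasDerivAt_sin (ω * t)).comp t hlin).const_mul A
  have hcos := ((hasDerivAt_cos (ω * t)).comp t hlin).const_mul B
  exact (hsin.add hcos).congr_deriv (by rw [sinusoid]; ring)

theorem deriv_sinusoid (ω A B : ℝ) :
    deriv (sinusoid ω A B) = sinusoid ω (-(B * ω)) (A * ω) :=
  funext fun t => (hasDerivAt_sinusoid ω A B t).deriv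

theorem sinusoid_solves_coupled_system {ω a₀ a φ₀ φ lam₀ lam b A₁ B₁ A₂ B₂ : ℝ}
    (hsin₁ : (a₀ * ω ^ 2 + φ₀) * A₁ + lam * ω / 2 * B₂ = φ₀ * b)
    (hcos₁ : (a₀ * ω ^ 2 + φ₀) * B₁ = lam * ω / 2 * A₂)
    (hsin₂ : (a * ω ^ 2 + φ) * A₂ + lam₀ * ω / 2 * B₁ + lam * ω / 2 * B₂ = 0)
    (hcos₂ : (a * ω ^ 2 + φ) * B₂ = lam₀ * ω / 2 * A₁ + lam * ω / 2 * A₂) (t : ℝ) :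
    a₀ * deriv (deriv (sinusoid ω A₁ B₁)) t - φ₀ * sinusoid ω A₁ B₁ t
        = -φ₀ * (b * sin (ω * t)) - (lam / 2) * deriv (sinusoid ω A₂ B₂) t ∧
      a * deriv (deriv (sinusoid ω A₂ B₂)) t - φ * sinusoid ω A₂ B₂ t
        = -(lam₀ / 2) * deriv (sinusoid ω A₁ B₁) t - (lam / 2) * deriv (sinusoid ω A₂ B₂) t := by
  simp only [deriv_sinusoid, sinusoid]
  constructor
  · linear_combination -sin (ω * t) * hsin₁ - cos (ω * t) * hcos₁
  · linear_combination -sin (ω * t) * hsin₂ - cos (ω * t) * hcos₂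

theorem cosine_periodic_components_solve_ODE_general
    (ω a₀ a φ₀ φ lam₀ lam b d₀ d₁ e₀ e₁ K : ℝ)
    (hω : 0 < ω) (ha₀ : 0 < a₀) (hφ₀ : 0 < φ₀)
    (hlam : 0 < lam)
    (hd₀ : d₀ = a₀ * ω ^ 2 + φ₀) (hd₁ : d₁ = a * ω ^ 2 + φ)
    (he₀ : e₀ = lam₀ * ω / 2) (he₁ : e₁ = lam * ω / 2)
    (hK : K = d₀ ^ 2 * d₁ ^ 2 + 2 * d₀ * d₁ * e₀ * e₁ + d₀ ^ 2 * e₁ ^ 2 + e₀ ^ 2 * e₁ ^ 2)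
    (QMj QMn : ℝ → ℝ)
    (hQMj : ∀ t, QMj t = (b * φ₀ / K) *
      ((d₀ * d₁ ^ 2 + d₁ * e₀ * e₁ + d₀ * e₁ ^ 2) * Real.sin (ω * t)
        - e₀ * e₁ ^ 2 * Real.cos (ω * t)))
    (hQMn : ∀ t, QMn t = (b * φ₀ / K) *
      (-(d₀ * e₀ * e₁) * Real.sin (ω * t)
        + e₀ * (d₀ * d₁ + e₀ * e₁) * Real.cos (ω * t))) :
    ∀ t : ℝ,
      a₀ * deriv (deriv QMj) t - φ₀ * QMj t
        = -φ₀ * (b * Real.sin (ω * t)) - (lam / 2) * deriv QMn t ∧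
      a * deriv (deriv QMn) t - φ * QMn t
        = -(lam₀ / 2) * deriv QMj t - (lam / 2) * deriv QMn t := by
  have hK_pos : 0 < K := by
    have hd₀_pos : 0 < d₀ := hd₀ ▸ by positivity
    have he₁_pos : 0 < e₁ := he₁ ▸ by positivity
    rw [show K = (d₀ * d₁ + e₀ * e₁) ^ 2 + (d₀ * e₁) ^ 2 by rw [hK]; ring]
    positivity
  set c := b * φ₀ / K
  have hcK : c * K = b * φ₀ := div_mul_cancel₀ _ hK_pos.ne'
  obtain rfl : QMj = sinusoid ω (c * (d₀ * d₁ ^ 2 + d₁ * e₀ * e₁ + d₀ * e₁ ^ 2))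
      (-(c * (e₀ * e₁ ^ 2))) := funext fun t => by rw [hQMj, sinusoid]; ring
  obtain rfl : QMn = sinusoid ω (-(c * (d₀ * e₀ * e₁))) (c * (e₀ * (d₀ * d₁ + e₀ * e₁))) :=
    funext fun t => by rw [hQMn, sinusoid]; ring
  refine sinusoid_solves_coupled_system ?_ ?_ ?_ ?_ <;>
    simp only [← hd₀, ← hd₁, ← he₀, ← he₁]
  · linear_combination hcK - c * hK
  all_goals ring

theorem cosine_periodic_components_solve_ODE
    (ω a₀ a φ₀ φ lam₀ lam b d₀ d₁ e₀ e₁ K : ℝ)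
    (hω : 0 < ω) (ha₀ : 0 < a₀) (ha : 0 < a) (hφ₀ : 0 < φ₀) (hφ : 0 < φ)
    (hlam₀ : 0 < lam₀) (hlam : 0 < lam) (hb : 0 < b)
    (hd₀ : d₀ = a₀ * ω ^ 2 + φ₀) (hd₁ : d₁ = a * ω ^ 2 + φ)
    (he₀ : e₀ = lam₀ * ω / 2) (he₁ : e₁ = lam * ω / 2)
    (hK : K = d₀ ^ 2 * d₁ ^ 2 + 2 * d₀ * d₁ * e₀ * e₁ + d₀ ^ 2 * e₁ ^ 2 + e₀ ^ 2 * e₁ ^ 2)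
    (QMj QMn : ℝ → ℝ)
    (hQMj : ∀ t, QMj t = (b * φ₀ / K) *
      ((d₀ * d₁ ^ 2 + d₁ * e₀ * e₁ + d₀ * e₁ ^ 2) * Real.sin (ω * t)
        - e₀ * e₁ ^ 2 * Real.cos (ω * t)))
    (hQMn : ∀ t, QMn t = (b * φ₀ / K) *
      (-(d₀ * e₀ * e₁) * Real.sin (ω * t)
        + e₀ * (d₀ * d₁ + e₀ * e₁) * Real.cos (ω * t))) :
    ∀ t : ℝ,
      a₀ * deriv (deriv QMj) t - φ₀ * QMj t
        = -φ₀ * (b * Real.sin (ω * t)) - (lam / 2) * deriv QMn t ∧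
      a * deriv (deriv QMn) t - φ * QMn t
        = -(lam₀ / 2) * deriv QMj t - (lam / 2) * deriv QMn t :=
  cosine_periodic_components_solve_ODE_general ω a₀ a φ₀ φ lam₀ lam b d₀ d₁ e₀ e₁ K hω ha₀ hφ₀ hlam
    hd₀ hd₁ he₀ he₁ hK QMj QMn hQMj hQMn
end

section
/- Let A be an invertible real n × n matrix and τ > 0 such that I − exp(τ·A) is invertible. Then for any continuous τ-periodic function B : ℝ → ℝⁿ, there exists a unique x₀ ∈ ℝⁿ such that the solution X(t) = exp(t·A)·x₀ + ∫₀ᵗ exp((t−s)·A)·B(s) ds satisfies X(τ) = X(0) = x₀; namely x₀ = (I − exp(τ·A))⁻¹ · ∫₀^τ exp((τ−s)·A)·B(s) ds, and the corresponding solution X is τ-periodic. -/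
open Matrix

/-!
With `E = exp (τ • A)` and `C = ∫₀^τ exp ((τ - s) • A) B s ds`, the time-`τ` map of the
variation-of-constants formula is the affine map `x ↦ E x + C`, whose unique fixed point is
`(1 - E)⁻¹ C` because `1 - E` is invertible. Periodicity of the solution through that fixed point
comes from the flow identity `X x₀ (t + τ) = X (X x₀ τ) t`, valid because `B` is `τ`-periodic:
split `∫₀^{t+τ}` at `τ`, pull `exp (t • A)` out of the first piece and shift the second by `τ`.
-/

open NormedSpace

namespace Matrix

variable {m : Type*} [Fintype m]

theorem mulVec_intervalIntegral {f : ℝ → m → ℝ} {a b : ℝ}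
    (hf : IntervalIntegrable f MeasureTheory.volume a b) (M : Matrix m m ℝ) :
    M *ᵥ ∫ s in a..b, f s = ∫ s in a..b, M *ᵥ f s :=
  ((mulVecLin M).toContinuousLinearMap.intervalIntegral_comp_comm hf).symm

variable [DecidableEq m]

theorem continuous_exp {𝕜 : Type*} [RCLike 𝕜] :
    Continuous (exp : Matrix m m 𝕜 → Matrix m m 𝕜) :=
  open scoped Norms.Operator in exp_continuous

theorem exp_add_smul (s t : ℝ) (A : Matrix m m ℝ) :
    exp ((s + t) • A) = exp (s • A) * exp (t • A) := by
  rw [add_smul, exp_add_of_commute _ _ (((Commute.refl A).smul_left s).smul_right t)]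

theorem eq_inv_mulVec_iff {R : Type*} [CommRing R] {M : Matrix m m R} (hM : IsUnit M)
    {x c : m → R} : x = M⁻¹ *ᵥ c ↔ M *ᵥ x = c := by
  have hdet := (isUnit_iff_isUnit_det M).mp hM
  constructor
  · rintro rfl
    rw [mulVec_mulVec, mul_nonsing_inv M hdet, one_mulVec]
  · rintro rfl
    rw [mulVec_mulVec, nonsing_inv_mul M hdet, one_mulVec]

theorem mulVec_add_eq_self_iff {R : Type*} [CommRing R] {E : Matrix m m R} (h : IsUnit (1 - E))
    {x c : m → R} : E *ᵥ x + c = x ↔ x = (1 - E)⁻¹ *ᵥ c := by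
  rw [eq_inv_mulVec_iff h, sub_mulVec, one_mulVec, sub_eq_iff_eq_add', eq_comm]

end Matrix

section VariationOfConstants

variable {m : Type*} [Fintype m] [DecidableEq m]

noncomputable def variationOfConstants (A : Matrix m m ℝ) (B : ℝ → m → ℝ) (x₀ : m → ℝ) (t : ℝ) :
    m → ℝ :=
  exp (t • A) *ᵥ x₀ + ∫ s in (0 : ℝ)..t, exp ((t - s) • A) *ᵥ B s

theorem intervalIntegrable_exp_smul_mulVec (A : Matrix m m ℝ) {B : ℝ → m → ℝ}
    (hB : Continuous B) (c a b : ℝ) :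
    IntervalIntegrable (fun s => exp ((c - s) • A) *ᵥ B s) MeasureTheory.volume a b :=
  (Continuous.matrix_mulVec (continuous_exp.comp (by fun_prop)) hB).intervalIntegrable a b

theorem variationOfConstants_add_period (A : Matrix m m ℝ) {B : ℝ → m → ℝ} {τ : ℝ}
    (hB : Continuous B) (hBper : Function.Periodic B τ) (x₀ : m → ℝ) (t : ℝ) :
    variationOfConstants A B x₀ (t + τ) =
      variationOfConstants A B (variationOfConstants A B x₀ τ) t := by
  have hint := intervalIntegrable_exp_smul_mulVec A hB
  have head : ∫ s in (0 : ℝ)..τ, exp ((t + τ - s) • A) *ᵥ B s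
      = exp (t • A) *ᵥ ∫ s in (0 : ℝ)..τ, exp ((τ - s) • A) *ᵥ B s := by
    rw [mulVec_intervalIntegral (hint τ 0 τ)]
    congr 1 with s : 1
    rw [mulVec_mulVec, ← exp_add_smul, add_sub_assoc]
  have tail : ∫ s in τ..(t + τ), exp ((t + τ - s) • A) *ᵥ B s
      = ∫ s in (0 : ℝ)..t, exp ((t - s) • A) *ᵥ B s := by
    have shift := intervalIntegral.integral_comp_add_right (a := 0) (b := t)
      (fun s => exp ((t + τ - s) • A) *ᵥ B s) τ
    rw [zero_add] at shift
    rw [← shift]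
    congr 1 with s : 1
    rw [hBper s, add_sub_add_right_eq_sub]
  rw [variationOfConstants, variationOfConstants, variationOfConstants,
    ← intervalIntegral.integral_add_adjacent_intervals (hint _ 0 τ) (hint _ τ (t + τ)), head, tail,
    exp_add_smul, mulVec_add, mulVec_mulVec, add_assoc]

end VariationOfConstants

theorem unique_periodic_solution_linear_ODE_general {n : ℕ}
    (A : Matrix (Fin n) (Fin n) ℝ)
    (τ : ℝ)
    (hI : IsUnit ((1 : Matrix (Fin n) (Fin n) ℝ) - NormedSpace.exp (τ • A)))
    (B : ℝ → Fin n → ℝ) (hB : Continuous B)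
    (hBper : ∀ t, B (t + τ) = B t)
    (X : (Fin n → ℝ) → ℝ → (Fin n → ℝ))
    (hX : ∀ x₀ t, X x₀ t = NormedSpace.exp (t • A) *ᵥ x₀
        + ∫ s in (0:ℝ)..t, NormedSpace.exp ((t - s) • A) *ᵥ B s) :
    (∃! x₀ : Fin n → ℝ, X x₀ τ = x₀) ∧
    (∀ x₀ : Fin n → ℝ,
      x₀ = ((1 : Matrix (Fin n) (Fin n) ℝ) - NormedSpace.exp (τ • A))⁻¹ *ᵥ
            (∫ s in (0:ℝ)..τ, NormedSpace.exp ((τ - s) • A) *ᵥ B s) →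
      X x₀ τ = x₀ ∧ ∀ t, X x₀ (t + τ) = X x₀ t) := by
  obtain rfl : X = variationOfConstants A B := funext fun x₀ => funext (hX x₀)
  have hfix : ∀ x₀, variationOfConstants A B x₀ τ = x₀ ↔ x₀ = (1 - exp (τ • A))⁻¹ *ᵥ
      ∫ s in (0 : ℝ)..τ, exp ((τ - s) • A) *ᵥ B s := fun _ => mulVec_add_eq_self_iff hI
  refine ⟨⟨_, (hfix _).mpr rfl, fun y hy => (hfix y).mp hy⟩, fun x₀ hx₀ => ?_⟩
  have hfixed := (hfix x₀).mpr hx₀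
  exact ⟨hfixed, fun t => by rw [variationOfConstants_add_period A hB hBper, hfixed]⟩

theorem unique_periodic_solution_linear_ODE {n : ℕ}
    (A : Matrix (Fin n) (Fin n) ℝ) (hA : IsUnit A)
    (τ : ℝ) (hτ : 0 < τ)
    (hI : IsUnit ((1 : Matrix (Fin n) (Fin n) ℝ) - NormedSpace.exp (τ • A)))
    (B : ℝ → Fin n → ℝ) (hB : Continuous B)
    (hBper : ∀ t, B (t + τ) = B t)
    (X : (Fin n → ℝ) → ℝ → (Fin n → ℝ))
    (hX : ∀ x₀ t, X x₀ t = NormedSpace.exp (t • A) *ᵥ x₀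
        + ∫ s in (0:ℝ)..t, NormedSpace.exp ((t - s) • A) *ᵥ B s) :
    (∃! x₀ : Fin n → ℝ, X x₀ τ = x₀) ∧
    (∀ x₀ : Fin n → ℝ,
      x₀ = ((1 : Matrix (Fin n) (Fin n) ℝ) - NormedSpace.exp (τ • A))⁻¹ *ᵥ
            (∫ s in (0:ℝ)..τ, NormedSpace.exp ((τ - s) • A) *ᵥ B s) →
      X x₀ τ = x₀ ∧ ∀ t, X x₀ (t + τ) = X x₀ t) :=
  unique_periodic_solution_linear_ODE_general A τ hI B hB hBper X hX
end

section
/- Let T > 0, θ₀ > 0, q₀ ∈ ℝ, and let R : [0, T] → ℝ be continuous. Define Q(t) = q₀·sinh(θ₀·(T−t))/sinh(θ₀·T) + (θ₀/sinh(θ₀·T))·∫₀ᵀ R(s)·sinh(θ₀·min(s,t))·sinh(θ₀·(T−max(s,t))) ds. Then Q(0) = q₀ and Q(T) = 0, and Q satisfies Q''(t) − θ₀²·Q(t) = −θ₀²·R(t) for all t ∈ (0, T). -/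
theorem major_no_interaction_solution (T θ₀ q₀ : ℝ) (hT : 0 < T) (hθ₀ : 0 < θ₀)
    (R : ℝ → ℝ) (hR : ContinuousOn R (Set.Icc 0 T))
    (Q : ℝ → ℝ)
    (hQ : ∀ t, Q t = q₀ * Real.sinh (θ₀ * (T - t)) / Real.sinh (θ₀ * T)
        + (θ₀ / Real.sinh (θ₀ * T)) *
          ∫ s in (0:ℝ)..T, R s * Real.sinh (θ₀ * min s t) * Real.sinh (θ₀ * (T - max s t))) :
    Q 0 = q₀ ∧ Q T = 0 ∧
    ∀ t ∈ Set.Ioo (0 : ℝ) T,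
      deriv (deriv Q) t - θ₀ ^ 2 * Q t = -θ₀ ^ 2 * R t := by
  have hsp : 0 < Real.sinh (θ₀ * T) := by positivity
  have hsne : Real.sinh (θ₀ * T) ≠ 0 := ne_of_gt hsp
  -- Boundary values
  have h0 : Q 0 = q₀ := by
    rw [hQ]
    have hint : (∫ s in (0:ℝ)..T,
        R s * Real.sinh (θ₀ * min s 0) * Real.sinh (θ₀ * (T - max s 0))) = 0 := by
      have h00 : (∫ s in (0:ℝ)..T,
          R s * Real.sinh (θ₀ * min s 0) * Real.sinh (θ₀ * (T - max s 0)))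
          = ∫ _s in (0:ℝ)..T, (0:ℝ) := by
        apply intervalIntegral.integral_congr
        intro s hs'
        rw [Set.uIcc_of_le hT.le] at hs'
        simp [min_eq_right hs'.1]
      rw [h00]; simp
    rw [hint]
    simp [sub_zero]
    field_simp
  have hTT : Q T = 0 := by
    rw [hQ]
    have hint : (∫ s in (0:ℝ)..T,
        R s * Real.sinh (θ₀ * min s T) * Real.sinh (θ₀ * (T - max s T))) = 0 := by
      have h00 : (∫ s in (0:ℝ)..T,
          R s * Real.sinh (θ₀ * min s T) * Real.sinh (θ₀ * (T - max s T)))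
          = ∫ _s in (0:ℝ)..T, (0:ℝ) := by
        apply intervalIntegral.integral_congr
        intro s hs'
        rw [Set.uIcc_of_le hT.le] at hs'
        simp [max_eq_right hs'.2]
      rw [h00]; simp
    rw [hint]
    simp
  refine ⟨h0, hTT, ?_⟩
  -- auxiliary functions
  set c1 : ℝ := q₀ / Real.sinh (θ₀ * T) with hc1
  set k : ℝ := θ₀ / Real.sinh (θ₀ * T) with hk
  set A : ℝ → ℝ := fun t => ∫ s in (0:ℝ)..t, R s * Real.sinh (θ₀ * s) with hA
  set C : ℝ → ℝ := fun t => ∫ s in (0:ℝ)..t, R s * Real.sinh (θ₀ * (T - s)) with hC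
  set g : ℝ → ℝ := fun t => c1 * Real.sinh (θ₀ * (T - t))
      + k * (Real.sinh (θ₀ * (T - t)) * A t + Real.sinh (θ₀ * t) * (C T - C t)) with hg
  set g' : ℝ → ℝ := fun t => -(c1 * θ₀) * Real.cosh (θ₀ * (T - t))
      + k * θ₀ * (-(Real.cosh (θ₀ * (T - t)) * A t)
        + Real.cosh (θ₀ * t) * (C T - C t)) with hg'def
  -- integrability facts
  have hsub : ∀ a b : ℝ, a ∈ Set.Icc 0 T → b ∈ Set.Icc 0 T →
      Set.uIcc a b ⊆ Set.Icc 0 T := by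
    intro a b ha hb
    rw [← Set.uIcc_of_le hT.le]
    exact Set.uIcc_subset_uIcc (by rwa [Set.uIcc_of_le hT.le]) (by rwa [Set.uIcc_of_le hT.le])
  have hAint : ∀ a b : ℝ, a ∈ Set.Icc 0 T → b ∈ Set.Icc 0 T →
      IntervalIntegrable (fun s => R s * Real.sinh (θ₀ * s)) MeasureTheory.volume a b := by
    intro a b ha hb
    apply ContinuousOn.intervalIntegrable
    apply ContinuousOn.mono (s := Set.Icc 0 T)
    · exact hR.mul (Real.continuous_sinh.comp (continuous_const.mul continuous_id)).continuousOn
    · exact hsub a b ha hb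
  have hCint : ∀ a b : ℝ, a ∈ Set.Icc 0 T → b ∈ Set.Icc 0 T →
      IntervalIntegrable (fun s => R s * Real.sinh (θ₀ * (T - s))) MeasureTheory.volume a b := by
    intro a b ha hb
    apply ContinuousOn.intervalIntegrable
    apply ContinuousOn.mono (s := Set.Icc 0 T)
    · exact hR.mul (Real.continuous_sinh.comp
        (continuous_const.mul (continuous_const.sub continuous_id))).continuousOn
    · exact hsub a b ha hb
  -- Q = g on Icc 0 T
  have hEq : ∀ t ∈ Set.Icc 0 T, Q t = g t := by
    intro t ht
    have hkernint : ∀ a b : ℝ, a ∈ Set.Icc 0 T → b ∈ Set.Icc 0 T →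
        IntervalIntegrable
          (fun s => R s * Real.sinh (θ₀ * min s t) * Real.sinh (θ₀ * (T - max s t)))
          MeasureTheory.volume a b := by
      intro a b ha hb
      apply ContinuousOn.intervalIntegrable
      apply ContinuousOn.mono (s := Set.Icc 0 T)
      · apply ContinuousOn.mul
        · exact hR.mul (Real.continuous_sinh.comp
            (continuous_const.mul (continuous_id.min continuous_const))).continuousOn
        · exact (Real.continuous_sinh.comp (continuous_const.mul
            (continuous_const.sub (continuous_id.max continuous_const)))).continuousOn
      · exact hsub a b ha hb
    have h0T : (0:ℝ) ∈ Set.Icc 0 T := by constructor <;> linarith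
    have hTT' : T ∈ Set.Icc (0:ℝ) T := by constructor <;> linarith
    have hsplit : (∫ s in (0:ℝ)..T,
          R s * Real.sinh (θ₀ * min s t) * Real.sinh (θ₀ * (T - max s t)))
        = (∫ s in (0:ℝ)..t, R s * Real.sinh (θ₀ * min s t) * Real.sinh (θ₀ * (T - max s t)))
        + ∫ s in t..T, R s * Real.sinh (θ₀ * min s t) * Real.sinh (θ₀ * (T - max s t)) :=
      (intervalIntegral.integral_add_adjacent_intervals
        (hkernint 0 t h0T ht) (hkernint t T ht hTT')).symm
    have hleft : (∫ s in (0:ℝ)..t,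
          R s * Real.sinh (θ₀ * min s t) * Real.sinh (θ₀ * (T - max s t)))
        = Real.sinh (θ₀ * (T - t)) * A t := by
      rw [hA]
      rw [show Real.sinh (θ₀ * (T - t)) * ∫ s in (0:ℝ)..t, R s * Real.sinh (θ₀ * s)
          = ∫ s in (0:ℝ)..t, Real.sinh (θ₀ * (T - t)) * (R s * Real.sinh (θ₀ * s)) from
        (intervalIntegral.integral_const_mul _ _).symm]
      apply intervalIntegral.integral_congr
      intro s hs'
      rw [Set.uIcc_of_le ht.1] at hs'
      beta_reduce
      rw [min_eq_left hs'.2, max_eq_right hs'.2]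
      ring
    have hright : (∫ s in t..T,
          R s * Real.sinh (θ₀ * min s t) * Real.sinh (θ₀ * (T - max s t)))
        = Real.sinh (θ₀ * t) * (C T - C t) := by
      rw [hC]
      rw [show C T - C t = ∫ s in t..T, R s * Real.sinh (θ₀ * (T - s)) from
        intervalIntegral.integral_interval_sub_left (hCint 0 T h0T hTT') (hCint 0 t h0T ht)]
      rw [show Real.sinh (θ₀ * t) * ∫ s in t..T, R s * Real.sinh (θ₀ * (T - s))
          = ∫ s in t..T, Real.sinh (θ₀ * t) * (R s * Real.sinh (θ₀ * (T - s))) from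
        (intervalIntegral.integral_const_mul _ _).symm]
      apply intervalIntegral.integral_congr
      intro s hs'
      rw [Set.uIcc_of_le ht.2] at hs'
      beta_reduce
      rw [min_eq_right hs'.1, max_eq_left hs'.1]
      ring
    rw [hQ, hsplit, hleft, hright, hg]
    simp only [hc1, hk]
    ring
  -- derivatives of A and C
  have hmemIcc : ∀ t ∈ Set.Ioo (0:ℝ) T, Set.Icc (0:ℝ) T ∈ nhds t := by
    intro t ht
    exact Icc_mem_nhds ht.1 ht.2
  have hAderiv : ∀ t ∈ Set.Ioo (0:ℝ) T, HasDerivAt A (R t * Real.sinh (θ₀ * t)) t := by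
    intro t ht
    have hca : ContinuousAt (fun s => R s * Real.sinh (θ₀ * s)) t := by
      apply ContinuousAt.mul
      · exact hR.continuousAt (hmemIcc t ht)
      · exact (Real.continuous_sinh.comp (continuous_const.mul continuous_id)).continuousAt
    have hmeas : StronglyMeasurableAtFilter (fun s => R s * Real.sinh (θ₀ * s)) (nhds t)
        MeasureTheory.volume := by
      apply ContinuousAt.stronglyMeasurableAtFilter (s := Set.Ioo (0:ℝ) T) isOpen_Ioo
      · intro x hx
        apply ContinuousAt.mul
        · exact hR.continuousAt (hmemIcc x hx)
        · exact (Real.continuous_sinh.comp (continuous_const.mul continuous_id)).continuousAt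
      · exact ht
    exact intervalIntegral.integral_hasDerivAt_right
      (hAint 0 t ⟨le_refl 0, hT.le⟩ ⟨ht.1.le, ht.2.le⟩) hmeas hca
  have hCderiv : ∀ t ∈ Set.Ioo (0:ℝ) T, HasDerivAt C (R t * Real.sinh (θ₀ * (T - t))) t := by
    intro t ht
    have hca : ContinuousAt (fun s => R s * Real.sinh (θ₀ * (T - s))) t := by
      apply ContinuousAt.mul
      · exact hR.continuousAt (hmemIcc t ht)
      · exact (Real.continuous_sinh.comp
          (continuous_const.mul (continuous_const.sub continuous_id))).continuousAt
    have hmeas : StronglyMeasurableAtFilter (fun s => R s * Real.sinh (θ₀ * (T - s))) (nhds t)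
        MeasureTheory.volume := by
      apply ContinuousAt.stronglyMeasurableAtFilter (s := Set.Ioo (0:ℝ) T) isOpen_Ioo
      · intro x hx
        apply ContinuousAt.mul
        · exact hR.continuousAt (hmemIcc x hx)
        · exact (Real.continuous_sinh.comp
            (continuous_const.mul (continuous_const.sub continuous_id))).continuousAt
      · exact ht
    exact intervalIntegral.integral_hasDerivAt_right
      (hCint 0 t ⟨le_refl 0, hT.le⟩ ⟨ht.1.le, ht.2.le⟩) hmeas hca
  -- derivative of elementary pieces
  have hinner1 : ∀ t : ℝ, HasDerivAt (fun u : ℝ => θ₀ * (T - u)) (-θ₀) t := by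
    intro t
    simpa using ((hasDerivAt_id t).const_sub T).const_mul θ₀
  have hinner2 : ∀ t : ℝ, HasDerivAt (fun u : ℝ => θ₀ * u) θ₀ t := by
    intro t
    simpa using (hasDerivAt_id t).const_mul θ₀
  have hsinh1 : ∀ t : ℝ, HasDerivAt (fun u => Real.sinh (θ₀ * (T - u)))
      (Real.cosh (θ₀ * (T - t)) * (-θ₀)) t := fun t => (hinner1 t).sinh
  have hsinh2 : ∀ t : ℝ, HasDerivAt (fun u => Real.sinh (θ₀ * u))
      (Real.cosh (θ₀ * t) * θ₀) t := fun t => (hinner2 t).sinh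
  have hcosh1 : ∀ t : ℝ, HasDerivAt (fun u => Real.cosh (θ₀ * (T - u)))
      (Real.sinh (θ₀ * (T - t)) * (-θ₀)) t := fun t => (hinner1 t).cosh
  have hcosh2 : ∀ t : ℝ, HasDerivAt (fun u => Real.cosh (θ₀ * u))
      (Real.sinh (θ₀ * t) * θ₀) t := fun t => (hinner2 t).cosh
  -- first derivative of g
  have hgderiv : ∀ t ∈ Set.Ioo (0:ℝ) T, HasDerivAt g (g' t) t := by
    intro t ht
    have h1 : HasDerivAt (fun u => c1 * Real.sinh (θ₀ * (T - u)))
        (c1 * (Real.cosh (θ₀ * (T - t)) * (-θ₀))) t := (hsinh1 t).const_mul c1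
    have h2 : HasDerivAt (fun u => Real.sinh (θ₀ * (T - u)) * A u)
        (Real.cosh (θ₀ * (T - t)) * (-θ₀) * A t
          + Real.sinh (θ₀ * (T - t)) * (R t * Real.sinh (θ₀ * t))) t :=
      (hsinh1 t).mul (hAderiv t ht)
    have h3 : HasDerivAt (fun u => Real.sinh (θ₀ * u) * (C T - C u))
        (Real.cosh (θ₀ * t) * θ₀ * (C T - C t)
          + Real.sinh (θ₀ * t) * (0 - R t * Real.sinh (θ₀ * (T - t)))) t :=
      (hsinh2 t).mul ((hasDerivAt_const t (C T)).sub (hCderiv t ht))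
    have := h1.add (((h2.add h3)).const_mul k)
    refine this.congr_deriv ?_
    rw [hg'def]
    ring
  -- second derivative
  have hg'deriv : ∀ t ∈ Set.Ioo (0:ℝ) T,
      HasDerivAt g' (θ₀ ^ 2 * g t - θ₀ ^ 2 * R t) t := by
    intro t ht
    have h1 : HasDerivAt (fun u => -(c1 * θ₀) * Real.cosh (θ₀ * (T - u)))
        (-(c1 * θ₀) * (Real.sinh (θ₀ * (T - t)) * (-θ₀))) t := (hcosh1 t).const_mul _
    have h2 : HasDerivAt (fun u => -(Real.cosh (θ₀ * (T - u)) * A u))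
        (-(Real.sinh (θ₀ * (T - t)) * (-θ₀) * A t
          + Real.cosh (θ₀ * (T - t)) * (R t * Real.sinh (θ₀ * t)))) t :=
      ((hcosh1 t).mul (hAderiv t ht)).neg
    have h3 : HasDerivAt (fun u => Real.cosh (θ₀ * u) * (C T - C u))
        (Real.sinh (θ₀ * t) * θ₀ * (C T - C t)
          + Real.cosh (θ₀ * t) * (0 - R t * Real.sinh (θ₀ * (T - t)))) t :=
      (hcosh2 t).mul ((hasDerivAt_const t (C T)).sub (hCderiv t ht))
    have hD := h1.add ((h2.add h3).const_mul (k * θ₀))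
    refine hD.congr_deriv ?_
    have hid : Real.sinh (θ₀ * t) * Real.cosh (θ₀ * (T - t))
        + Real.cosh (θ₀ * t) * Real.sinh (θ₀ * (T - t)) = Real.sinh (θ₀ * T) := by
      rw [← Real.sinh_add]
      ring_nf
    have hkθ : k * θ₀ * Real.sinh (θ₀ * T) = θ₀ ^ 2 := by
      rw [hk]; field_simp
    have expand : -(c1 * θ₀) * (Real.sinh (θ₀ * (T - t)) * (-θ₀))
        + k * θ₀ * (-(Real.sinh (θ₀ * (T - t)) * (-θ₀) * A t
            + Real.cosh (θ₀ * (T - t)) * (R t * Real.sinh (θ₀ * t)))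
          + (Real.sinh (θ₀ * t) * θ₀ * (C T - C t)
          + Real.cosh (θ₀ * t) * (0 - R t * Real.sinh (θ₀ * (T - t)))))
        = θ₀ ^ 2 * g t
          - (k * θ₀ * Real.sinh (θ₀ * T)) * R t := by
      rw [← hid, hg]
      ring
    rw [expand, hkθ]
  -- put it together
  intro t ht
  have hQg : Q =ᶠ[nhds t] g :=
    Filter.eventuallyEq_of_mem (Ioo_mem_nhds ht.1 ht.2)
      (fun x hx => hEq x (Set.Ioo_subset_Icc_self hx))
  have hdQ : ∀ u ∈ Set.Ioo (0:ℝ) T, deriv Q u = g' u := by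
    intro u hu
    have hQg' : Q =ᶠ[nhds u] g :=
      Filter.eventuallyEq_of_mem (Ioo_mem_nhds hu.1 hu.2)
        (fun x hx => hEq x (Set.Ioo_subset_Icc_self hx))
    rw [hQg'.deriv_eq, (hgderiv u hu).deriv]
  have hdQev : deriv Q =ᶠ[nhds t] g' :=
    Filter.eventuallyEq_of_mem (Ioo_mem_nhds ht.1 ht.2) hdQ
  have hd2 : deriv (deriv Q) t = θ₀ ^ 2 * g t - θ₀ ^ 2 * R t := by
    rw [hdQev.deriv_eq, (hg'deriv t ht).deriv]
  rw [hd2, hEq t (Set.Ioo_subset_Icc_self ht)]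
  ring
end

section
/- Let ω > 0 and b > 0, and let d₀, d₁, e₀, e₁, K be positive constants as in the cosine equilibrium. Define SPer(t) = (2·b·φ₀/(K·ω))·d₁·e₀·[(d₀·d₁ + e₀·e₁)·sin(ω·t) + d₀·e₁·cos(ω·t)]. Then the amplitude of SPer, defined as (1/2)·(max − min) over one period, equals (2·b·φ₀/ω)·d₁·e₀·√((d₀·d₁ + e₀·e₁)² + d₀²·e₁²)/K, and this is at most (2·b·φ₀/ω)·e₀/d₀. -/
/-!
Writing `(B, A) = R (cos θ, sin θ)` with `R = √(A² + B²)` and `θ` the argument of `B + A i` gives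
`A sin x + B cos x = R cos (x - θ)`, so over one full period the function sweeps out exactly
`[-R, R]`. In the theorem `R² = K`, and the bound follows from `d₁ e₀ √K / K = d₁ e₀ / √K`
together with `√K ≥ d₀ d₁`.
-/

open Real Set

theorem exists_sin_cos_comb_eq_mul_cos_sub (A B : ℝ) :
    ∃ θ, ∀ x, A * sin x + B * cos x = √(A ^ 2 + B ^ 2) * cos (x - θ) := by
  set z : ℂ := ⟨B, A⟩
  have hz : ‖z‖ = √(A ^ 2 + B ^ 2) := by
    rw [Complex.norm_def, Complex.normSq_mk, add_comm]; ring_nf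
  have hsin : ‖z‖ * sin z.arg = A := Complex.norm_mul_sin_arg z
  have hcos : ‖z‖ * cos z.arg = B := Complex.norm_mul_cos_arg z
  refine ⟨z.arg, fun x => ?_⟩
  rw [cos_sub, ← hz]
  linear_combination -(sin x) * hsin - (cos x) * hcos

theorem range_sin_cos_comb (A B : ℝ) :
    range (fun x => A * sin x + B * cos x) = Icc (-√(A ^ 2 + B ^ 2)) √(A ^ 2 + B ^ 2) := by
  obtain ⟨θ, hθ⟩ := exists_sin_cos_comb_eq_mul_cos_sub A B
  have hshift : range (fun x => cos (x - θ)) = Icc (-1) 1 :=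
    range_cos ▸ (Equiv.subRight θ).surjective.range_comp cos
  rw [funext hθ, range_comp' (√(A ^ 2 + B ^ 2) * ·) fun x => cos (x - θ), hshift,
    image_mul_left_Icc (sqrt_nonneg _) (by norm_num), mul_neg_one, mul_one]

theorem range_const_mul_sin_cos_comb (A B C ω : ℝ) (hC : 0 ≤ C) (hω : ω ≠ 0) :
    range (fun t => C * (A * sin (ω * t) + B * cos (ω * t)))
      = Icc (-(C * √(A ^ 2 + B ^ 2))) (C * √(A ^ 2 + B ^ 2)) := by
  have hscale : range (fun t => A * sin (ω * t) + B * cos (ω * t))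
      = range (fun x => A * sin x + B * cos x) :=
    (mul_left_surjective₀ hω).range_comp fun x => A * sin x + B * cos x
  rw [range_comp' (C * ·) fun t => A * sin (ω * t) + B * cos (ω * t), hscale, range_sin_cos_comb,
    image_mul_left_Icc hC (by simp), mul_neg]

theorem image_Icc_period_const_mul_sin_cos_comb (A B C ω a : ℝ) (hC : 0 ≤ C) (hω : 0 < ω) :
    (fun t => C * (A * sin (ω * t) + B * cos (ω * t))) '' Icc a (a + 2 * π / ω)
      = Icc (-(C * √(A ^ 2 + B ^ 2))) (C * √(A ^ 2 + B ^ 2)) := by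
  have hperiodic : Function.Periodic (fun x => C * (A * sin x + B * cos x)) (2 * π) := by
    intro x
    simp only [sin_add_two_pi, cos_add_two_pi]
  have hperiod : ω⁻¹ * (2 * π) = 2 * π / ω := by ring
  rw [← hperiod, (hperiodic.const_mul ω).image_Icc (by positivity),
    range_const_mul_sin_cos_comb A B C ω hC hω.ne']

theorem price_periodic_amplitude (ω b φ₀ d₀ d₁ e₀ e₁ K : ℝ)
    (hω : 0 < ω) (hb : 0 < b) (hφ₀ : 0 < φ₀)
    (hd₀ : 0 < d₀) (hd₁ : 0 < d₁) (he₀ : 0 < e₀) (he₁ : 0 < e₁)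
    (hK : K = d₀ ^ 2 * d₁ ^ 2 + 2 * d₀ * d₁ * e₀ * e₁ + d₀ ^ 2 * e₁ ^ 2 + e₀ ^ 2 * e₁ ^ 2)
    (SPer : ℝ → ℝ)
    (hS : ∀ t, SPer t = (2 * b * φ₀ / (K * ω)) * d₁ * e₀ *
      ((d₀ * d₁ + e₀ * e₁) * Real.sin (ω * t) + d₀ * e₁ * Real.cos (ω * t))) :
    (1 / 2) * (sSup (SPer '' Set.Icc 0 (2 * Real.pi / ω))
        - sInf (SPer '' Set.Icc 0 (2 * Real.pi / ω)))
      = (2 * b * φ₀ / ω) * d₁ * e₀ *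
          Real.sqrt ((d₀ * d₁ + e₀ * e₁) ^ 2 + d₀ ^ 2 * e₁ ^ 2) / K ∧
    (2 * b * φ₀ / ω) * d₁ * e₀ *
          Real.sqrt ((d₀ * d₁ + e₀ * e₁) ^ 2 + d₀ ^ 2 * e₁ ^ 2) / K
      ≤ (2 * b * φ₀ / ω) * e₀ / d₀ := by
  have hK' : K = (d₀ * d₁ + e₀ * e₁) ^ 2 + d₀ ^ 2 * e₁ ^ 2 := by rw [hK]; ring
  have hKpos : 0 < K := by rw [hK]; positivity
  have himage := image_Icc_period_const_mul_sin_cos_comb (d₀ * d₁ + e₀ * e₁) (d₀ * e₁)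
    (2 * b * φ₀ / (K * ω) * d₁ * e₀) ω 0 (by positivity) hω
  rw [← funext hS, zero_add, mul_pow, ← hK'] at himage
  rw [← hK', himage, csSup_Icc (neg_le_self (by positivity)),
    csInf_Icc (neg_le_self (by positivity))]
  constructor
  · field_simp
    ring
  · have hsqrtK : d₀ * d₁ ≤ √K := le_sqrt_of_sq_le (by rw [hK]; nlinarith [mul_pos (mul_pos hd₀ hd₁) (mul_pos he₀ he₁)])
    calc 2 * b * φ₀ / ω * d₁ * e₀ * √K / K
        = 2 * b * φ₀ / ω * d₁ * e₀ / √K := by rw [mul_div_assoc, sqrt_div_self', mul_one_div]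
      _ ≤ 2 * b * φ₀ / ω * d₁ * e₀ / (d₀ * d₁) :=
          div_le_div_of_nonneg_left (by positivity) (by positivity) hsqrtK
      _ = 2 * b * φ₀ / ω * e₀ / d₀ := by field_simp
end
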